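/- arXiv:1612.05423 — 3 statements merged into one kernel-verified Lean document; each statement's English description precedes it below -/
import Mathlib

section
/- For all k ≥ 1, in the ring R: G_{k_d} − G_{k_c} = E_{k_d}, and E_{k_d} = d q^k (E_{k_c} + E_{k_a} + G_{(k−1)_c}). -/
open Finset PowerSeries

namespace Primc

/-- Colours: `0 = a`, `1 = b`, `2 = c`, `3 = d`. -/
abbrev Colour := Fin 4

/-- A coloured part `k_z`: an underlying integer `k` together with its colour `z`. -/
abbrev CPart := ℕ × Colour

/-- The matrix `D` of minimal differences, with rows and columns indexed by the colours
`a, b, c, d` in this order. -/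
def Dmat : Colour → Colour → ℕ := ![![2,1,2,2], ![1,0,1,1], ![0,1,0,2], ![0,1,0,2]]

/-- The position of a coloured part in the total order
`1_a < 1_b < 1_c < 1_d < 2_a < 2_b < 2_c < 2_d < ⋯`. -/
def pos (p : CPart) : ℕ := 4 * p.1 + (p.2 : ℕ)

/-- A Primc partition: a finite sequence of coloured positive integers, non-increasing in the
above total order, in which consecutive parts `λ_i, λ_{i+1}` of colours `x, y` satisfy
`λ_i − λ_{i+1} ≥ D(x,y)`. -/
def IsPrimc (l : List CPart) : Prop :=
  (∀ p ∈ l, 1 ≤ p.1) ∧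
  l.Chain' fun p r => pos r ≤ pos p ∧ r.1 + Dmat p.2 r.2 ≤ p.1

/-- The weight of a coloured partition: the sum of the underlying integers of its parts. -/
def wt (l : List CPart) : ℕ := (l.map Prod.fst).sum

/-- The number of parts of colour `z`. -/
def nc (l : List CPart) (z : Colour) : ℕ := l.countP fun p => p.2 == z

/-- `R₀ = ℤ[a,c,d]`, with `a = X 0`, `c = X 1`, `d = X 2`. -/
abbrev R0 := MvPolynomial (Fin 3) ℤ

/-- `R = ℤ[a,c,d][[q]]`. -/
abbrev R := PowerSeries R0

/-- The variable `q`. -/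
noncomputable def qq : R := PowerSeries.X

/-- The variable `a`. -/
noncomputable def av : R0 := MvPolynomial.X 0

/-- The variable `c`. -/
noncomputable def cv : R0 := MvPolynomial.X 1

/-- The variable `d`. -/
noncomputable def dv : R0 := MvPolynomial.X 2

/-- The monomial `a^{#(a-parts)} c^{#(c-parts)} d^{#(d-parts)}` attached to a coloured
partition. -/
noncomputable def mono (l : List CPart) : R0 := av ^ nc l 0 * cv ^ nc l 2 * dv ^ nc l 3

/-- The infinite product `∏_{j ≥ 0} f j`, defined coefficientwise: the coefficient of `qⁿ` is
the corresponding coefficient of the partial product `∏_{j ≤ n} f j`.  This agrees with the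
usual (coefficientwise convergent) infinite product whenever the factor `f j` is `≡ 1`
modulo `q^{j+1}`, as is the case for all products appearing here. -/
noncomputable def iprod (f : ℕ → R) : R :=
  PowerSeries.mk fun n => PowerSeries.coeff n (∏ j ∈ Finset.range (n + 1), f j)

/-- The largest part of a Primc partition (its parts being written in non-increasing order),
with the convention that the empty partition has largest part `0_b`. -/
def top (l : List CPart) : CPart := l.headD (0, 1)

/-- `G_{k_x} ∈ R`: the sum of `q^{|λ|} a^{#(a-parts)} c^{#(c-parts)} d^{#(d-parts)}` over all
Primc partitions `λ` whose largest part is at most `k_x` in the colour order. -/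
noncomputable def G (k : ℕ) (x : Colour) : R :=
  PowerSeries.mk fun n =>
    ∑ᶠ lam : {l : List CPart // IsPrimc l ∧ wt l = n ∧ pos (top l) ≤ pos (k, x)}, mono lam.1

/-- `E_{k_x} ∈ R`: the sum of `q^{|λ|} a^{#(a-parts)} c^{#(c-parts)} d^{#(d-parts)}` over all
Primc partitions `λ` whose largest part is exactly `k_x` (so `E_{0_b} = 1`, the empty
partition having largest part `0_b` by convention). -/
noncomputable def E (k : ℕ) (x : Colour) : R :=
  PowerSeries.mk fun n =>
    ∑ᶠ lam : {l : List CPart // IsPrimc l ∧ wt l = n ∧ top l = (k, x)}, mono lam.1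

/-! Both identities come from sorting partitions by their largest part. A largest part at most
`k_d` is either `k_d` itself or at most `k_c`. A partition with largest part `k_d` is `k_d`
followed by any Primc partition whose largest part `r` satisfies `r + D(d, colour r) ≤ k`; by the
`d`-row `(0,1,0,2)` of `D` these `r` are exactly `k_c`, `k_a` and the parts up to `(k-1)_c`
(the empty partition counts as largest part `0_b`). -/

def CanPrecede (p r : CPart) : Prop := pos r ≤ pos p ∧ r.1 + Dmat p.2 r.2 ≤ p.1

def primcSet (n : ℕ) (P : CPart → Prop) : Set (List CPart) :=
  {l | IsPrimc l ∧ wt l = n ∧ P (top l)}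

noncomputable def topSeries (P : CPart → Prop) : R :=
  PowerSeries.mk fun n =>
    ∑ᶠ lam : {l : List CPart // IsPrimc l ∧ wt l = n ∧ P (top l)}, mono lam.1

lemma G_eq_topSeries (k : ℕ) (x : Colour) : G k x = topSeries (pos · ≤ pos (k, x)) := rfl

lemma E_eq_topSeries (k : ℕ) (x : Colour) : E k x = topSeries (· = (k, x)) := rfl

lemma pos_injective : Function.Injective pos := by
  rintro ⟨m, z⟩ ⟨m', z'⟩ h
  have := z.isLt
  have := z'.isLt
  simp only [pos] at h
  ext <;> simp only <;> omega

lemma wt_cons (p : CPart) (t : List CPart) : wt (p :: t) = p.1 + wt t := by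
  simp [wt]

lemma mono_cons (p : CPart) (t : List CPart) : mono (p :: t) = mono [p] * mono t := by
  simp only [mono, nc, List.countP_cons, List.countP_nil, pow_add]
  ring

lemma isPrimc_iff (l : List CPart) : IsPrimc l ↔ (∀ p ∈ l, 1 ≤ p.1) ∧ l.IsChain CanPrecede :=
  Iff.rfl

lemma canPrecede_top_nil {p : CPart} (hp : 1 ≤ p.1) : CanPrecede p (top []) := by
  have hD : ∀ z, Dmat z 1 ≤ 1 := by decide
  exact ⟨by simp only [top, List.headD_nil, pos]; omega, by simpa [top] using (hD p.2).trans hp⟩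

lemma isPrimc_cons_iff (p : CPart) (t : List CPart) :
    IsPrimc (p :: t) ↔ 1 ≤ p.1 ∧ IsPrimc t ∧ CanPrecede p (top t) := by
  simp only [isPrimc_iff, List.forall_mem_cons]
  cases t with
  | nil =>
    have := @canPrecede_top_nil p
    simp only [List.isChain_singleton, List.isChain_nil, List.not_mem_nil]
    tauto
  | cons r t =>
    simp only [top, List.headD_cons, List.isChain_cons_cons]
    tauto

lemma finite_primcSet (n : ℕ) (P : CPart → Prop) : (primcSet n P).Finite := by
  refine ((List.finite_length_le (Fin (n + 1) × Colour) n).image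
    (List.map fun p => ((p.1 : ℕ), p.2))).subset ?_
  rintro l ⟨⟨hpos, -⟩, hwt, -⟩
  have hle : ∀ p ∈ l, p.1 ≤ n := fun p hp =>
    hwt ▸ List.le_sum_of_mem (List.mem_map_of_mem hp)
  refine ⟨l.map fun p : CPart => (Fin.ofNat (n + 1) p.1, p.2), ?_, ?_⟩
  · have := List.length_le_sum_of_one_le (l.map Prod.fst) (by simpa using hpos)
    simp only [wt] at hwt
    simpa [hwt] using this
  · rw [List.map_map]
    refine (List.map_congr_left fun p hp => ?_).trans l.map_id
    simp [Nat.mod_eq_of_lt (Nat.lt_succ_of_le (hle p hp))]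

lemma coeff_topSeries (n : ℕ) (P : CPart → Prop) :
    coeff n (topSeries P) = ∑ᶠ l ∈ primcSet n P, mono l := by
  rw [topSeries, coeff_mk, finsum_subtype_eq_finsum_cond]
  rfl

lemma topSeries_congr {P Q : CPart → Prop} (h : ∀ r, P r ↔ Q r) :
    topSeries P = topSeries Q :=
  congrArg topSeries (funext fun r => propext (h r))

lemma topSeries_or {P Q : CPart → Prop} (h : ∀ r, P r → ¬ Q r) :
    topSeries (fun r => P r ∨ Q r) = topSeries P + topSeries Q := by
  refine PowerSeries.ext fun n => ?_
  have hunion : primcSet n (fun r => P r ∨ Q r) = primcSet n P ∪ primcSet n Q := by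
    ext l
    simp only [primcSet, Set.mem_union, Set.mem_ofPred_eq, ← and_or_left]
  have hdisj : Disjoint (primcSet n P) (primcSet n Q) :=
    Set.disjoint_left.2 fun l hP hQ => h _ hP.2.2 hQ.2.2
  rw [map_add, coeff_topSeries, coeff_topSeries, coeff_topSeries, hunion,
    finsum_mem_union hdisj (finite_primcSet n P) (finite_primcSet n Q)]

lemma primcSet_eq_image (n : ℕ) (p : CPart) (hp : 1 ≤ p.1) :
    primcSet (p.1 + n) (· = p) = (p :: ·) '' primcSet n (CanPrecede p) := by
  ext l
  constructor
  · rintro ⟨hl, hwt, htop⟩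
    cases l with
    | nil => exact absurd (congrArg Prod.fst htop) (by simp [top]; omega)
    | cons r t =>
      obtain rfl : r = p := htop
      obtain ⟨-, ht, hpt⟩ := (isPrimc_cons_iff r t).1 hl
      exact ⟨t, ⟨ht, by rw [wt_cons] at hwt; omega, hpt⟩, rfl⟩
  · rintro ⟨t, ⟨ht, hwt, hpt⟩, rfl⟩
    exact ⟨(isPrimc_cons_iff p t).2 ⟨hp, ht, hpt⟩, by rw [wt_cons, hwt], rfl⟩

lemma primcSet_eq_empty {n : ℕ} {p : CPart} (hn : n < p.1) : primcSet n (· = p) = ∅ := by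
  refine Set.eq_empty_of_forall_notMem fun l ⟨_, hwt, htop⟩ => ?_
  cases l with
  | nil => exact absurd (congrArg Prod.fst htop) (by simp [top]; omega)
  | cons r t =>
    obtain rfl : r = p := htop
    rw [wt_cons] at hwt
    omega

lemma topSeries_eq_mul_topSeries_canPrecede (p : CPart) (hp : 1 ≤ p.1) :
    topSeries (· = p) = C (mono [p]) * qq ^ p.1 * topSeries (CanPrecede p) := by
  refine PowerSeries.ext fun n => ?_
  rw [mul_comm (C _), mul_assoc, qq, coeff_X_pow_mul', coeff_topSeries]
  rcases lt_or_ge n p.1 with hn | hn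
  · rw [primcSet_eq_empty hn, finsum_mem_empty, if_neg (by omega)]
  obtain ⟨m, rfl⟩ := Nat.exists_eq_add_of_le hn
  rw [if_pos hn, Nat.add_sub_cancel_left, coeff_C_mul, coeff_topSeries, primcSet_eq_image m p hp,
    finsum_mem_image fun _ _ _ _ h => List.cons_injective h,
    mul_finsum_mem' _ _ (finite_primcSet m _)]
  exact finsum_mem_congr rfl fun t _ => mono_cons p t

lemma pos_le_pos_d_iff (k : ℕ) (r : CPart) :
    pos r ≤ pos (k, 3) ↔ r = (k, 3) ∨ pos r ≤ pos (k, 2) := by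
  rw [← pos_injective.eq_iff]
  simp only [pos, Fin.isValue, Fin.coe_ofNat_eq_mod, Nat.mod_succ, Nat.reduceMod]
  omega

lemma canPrecede_d_iff {k : ℕ} (hk : 1 ≤ k) (r : CPart) :
    CanPrecede (k, 3) r ↔ (r = (k, 2) ∨ r = (k, 0)) ∨ pos r ≤ pos (k - 1, 2) := by
  obtain ⟨m, z⟩ := r
  fin_cases z <;> simp [CanPrecede, pos, Dmat] <;> omega

/-- Equation (2.1a): for all `k ≥ 1`, `G_{k_d} − G_{k_c} = E_{k_d}` and
`E_{k_d} = d q^k (E_{k_c} + E_{k_a} + G_{(k−1)_c})` in `R`. -/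
theorem statement8 (k : ℕ) (hk : 1 ≤ k) :
    G k 3 - G k 2 = E k 3 ∧
    E k 3 = PowerSeries.C dv * qq ^ k * (E k 2 + E k 0 + G (k - 1) 2) := by
  have hG : G k 3 = E k 3 + G k 2 := by
    simp only [E_eq_topSeries, G_eq_topSeries]
    rw [topSeries_congr (pos_le_pos_d_iff k), topSeries_or]
    rintro r rfl
    simp [pos]
  have hmono : mono [(k, 3)] = dv := by simp [mono, nc]
  refine ⟨sub_eq_of_eq_add hG, ?_⟩
  simp only [E_eq_topSeries, G_eq_topSeries]
  rw [topSeries_eq_mul_topSeries_canPrecede (k, 3) hk,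
    hmono, topSeries_congr (canPrecede_d_iff hk), topSeries_or, topSeries_or]
  · rintro r rfl
    simp
  · rintro r (rfl | rfl) <;> simp [pos] <;> omega

end Primc
end

section
/- For all k ≥ 0, in the ring R: d · E_{k_c} = c · E_{k_d}. -/
open Finset PowerSeries

namespace Primc

/-!
Replacing the largest part `k_c` by `k_d` is a weight-preserving bijection between the Primc
partitions with largest part `k_c` and those with largest part `k_d`: rows `c` and `d` of `D`
coincide, so the tail may follow either part. The bijection trades one part of colour `c` for
one of colour `d`, i.e. it multiplies the monomial by `d / c`.
-/

lemma eq_cons_tail_of_top_eq {l : List CPart} {p : CPart} (hp : p.2 ≠ 1) (h : top l = p) :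
    l = p :: l.tail := by
  cases l with
  | nil => exact absurd (congrArg Prod.snd h).symm hp
  | cons r t => simp_all [top]

def topEquivTail (n : ℕ) (p : CPart) (hp : p.2 ≠ 1) :
    {l : List CPart // IsPrimc l ∧ wt l = n ∧ top l = p} ≃
      {t : List CPart // IsPrimc (p :: t) ∧ wt (p :: t) = n} where
  toFun l := ⟨l.1.tail, by
    rw [← eq_cons_tail_of_top_eq hp l.2.2.2]
    exact ⟨l.2.1, l.2.2.1⟩⟩
  invFun t := ⟨p :: t.1, t.2.1, t.2.2, rfl⟩
  left_inv l := Subtype.ext (eq_cons_tail_of_top_eq hp l.2.2.2).symm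
  right_inv _ := rfl

lemma coeff_E (k n : ℕ) {x : Colour} (hx : x ≠ 1) :
    coeff n (E k x) =
      ∑ᶠ t : {t : List CPart // IsPrimc ((k, x) :: t) ∧ wt ((k, x) :: t) = n},
        mono ((k, x) :: t.1) := by
  rw [E, coeff_mk]
  exact (finsum_eq_of_bijective _ (topEquivTail n (k, x) hx).symm.bijective fun _ => rfl).symm

/-- Rows `c` and `d` of `D` agree, and `D(d,d) > 0` keeps `k_d` from following `k_d`. -/
lemma next_part_c_iff_d (k : ℕ) (r : CPart) :
    (pos r ≤ pos (k, 2) ∧ r.1 + Dmat 2 r.2 ≤ k) ↔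
      (pos r ≤ pos (k, 3) ∧ r.1 + Dmat 3 r.2 ≤ k) := by
  obtain ⟨m, y⟩ := r
  fin_cases y <;> simp [pos, Dmat] <;> omega

lemma isPrimc_cons_c_iff_cons_d (k : ℕ) (t : List CPart) :
    IsPrimc ((k, 2) :: t) ↔ IsPrimc ((k, 3) :: t) := by
  change (_ ∧ List.IsChain _ _) ↔ (_ ∧ List.IsChain _ _)
  simp only [List.isChain_cons, List.forall_mem_cons, next_part_c_iff_d]

lemma dv_mul_mono_cons_c (k : ℕ) (t : List CPart) :
    dv * mono ((k, 2) :: t) = cv * mono ((k, 3) :: t) := by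
  simp only [mono, nc, Fin.isValue, Fin.reduceBEq, Bool.false_eq_true, not_false_eq_true,
    List.countP_cons_of_neg, BEq.rfl, List.countP_cons_of_pos]
  ring

/-- For all `k ≥ 0`, `d · E_{k_c} = c · E_{k_d}` in `R`. -/
theorem statement12 (k : ℕ) :
    PowerSeries.C dv * E k 2 = PowerSeries.C cv * E k 3 := by
  ext n : 1
  have tails_c_iff_d (t : List CPart) :
      (IsPrimc ((k, 2) :: t) ∧ wt ((k, 2) :: t) = n) ↔
        (IsPrimc ((k, 3) :: t) ∧ wt ((k, 3) :: t) = n) := by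
    rw [isPrimc_cons_c_iff_cons_d, wt_cons, wt_cons]
  rw [coeff_C_mul, coeff_C_mul, coeff_E k n (by decide), coeff_E k n (by decide), mul_finsum,
    mul_finsum]
  exact finsum_eq_of_bijective _ (Equiv.subtypeEquivRight tails_c_iff_d).bijective
    fun t => dv_mul_mono_cons_c k t.1

end Primc
end

section
/- For each δ ∈ {0, 1}, as an identity of formal power series in ℤ[[q]]: ∑_{i ≥ 0} q^{\binom{2i+δ}{2}} / (q;q)_{2i+δ} = (−q;q)_∞. (The sum converges in ℤ[[q]] since the exponent \binom{2i+δ}{2} tends to infinity with i, and each (q;q)_{2i+δ} is invertible since it has constant term 1.) -/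
/-!
Write `T n = q^{binom(n,2)}/(q;q)_n` and `E n = q^n T n = q^{binom(n+1,2)}/(q;q)_n`. Since
`(1 - q^{n+1}) T (n+1) = q^n T n`, one has `T 0 = E 0` and `T (n+1) = E n + E (n+1)`, so the even
and the odd terms of the left-hand side each pair off consecutive terms of Euler's series
`∑ E n`. It remains to show `∑ E n = (−q;q)_∞`, which follows from Cauchy's finite identity
`(−q;q)_N = ∑_k q^{binom(k+1,2)} [N, k]_q` by letting `N → ∞`, because the Gaussian binomial
`[N, k]_q` agrees with `1/(q;q)_k` up to order `q^{N+1-k}`.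
-/

open Finset PowerSeries

namespace EulerSum

/-- `(q;q)_n = ∏_{j=0}^{n−1} (1 − q^{j+1}) ∈ ℤ[[q]]`. -/
noncomputable def poch (n : ℕ) : PowerSeries ℤ :=
  ∏ j ∈ Finset.range n, (1 - PowerSeries.X ^ (j + 1))

/-- The infinite series `∑_{i ≥ 0} q^{binom(2i+δ,2)} / (q;q)_{2i+δ}`, defined
coefficientwise: since the `i`-th term has `q`-order `binom(2i+δ,2) ≥ i`, only the terms with
`i ≤ m` can contribute to the coefficient of `qᵐ`, so that coefficient is the corresponding
coefficient of the partial sum `∑_{i ≤ m}`.  Each `(q;q)_{2i+δ}` has constant term `1`, hence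
is invertible in `ℤ[[q]]`, its inverse given by `Ring.inverse`. -/
noncomputable def lhs (δ : ℕ) : PowerSeries ℤ :=
  PowerSeries.mk fun m => PowerSeries.coeff m
    (∑ i ∈ Finset.range (m + 1),
      PowerSeries.X ^ Nat.choose (2 * i + δ) 2 * Ring.inverse (poch (2 * i + δ)))

/-- The infinite product `(−q;q)_∞ = ∏_{j ≥ 0} (1 + q^{j+1})`, defined coefficientwise: the
factor `1 + q^{j+1}` is `≡ 1` modulo `q^{j+1}`, so the coefficient of `qⁿ` is the
corresponding coefficient of the partial product `∏_{j ≤ n}`. -/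
noncomputable def rhs : PowerSeries ℤ :=
  PowerSeries.mk fun n => PowerSeries.coeff n
    (∏ j ∈ Finset.range (n + 1), (1 + PowerSeries.X ^ (j + 1)))

theorem dvd_prod_sub_one {ι R : Type*} [CommRing R] {a : R} {s : Finset ι} {f : ι → R}
    (h : ∀ i ∈ s, a ∣ f i - 1) : a ∣ ∏ i ∈ s, f i - 1 :=
  prod_induction f (fun x => a ∣ x - 1)
    (fun x y hx hy => by
      rw [show x * y - 1 = x * (y - 1) + (x - 1) by ring]
      exact dvd_add (dvd_mul_of_dvd_right hy x) hx)
    (by simp) h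

theorem choose_two_succ (n : ℕ) : (n + 1).choose 2 = n.choose 2 + n := by
  rw [Nat.choose_succ_succ, Nat.choose_one_right, add_comm]

theorem isUnit_poch (n : ℕ) : IsUnit (poch n) := by
  simp [isUnit_iff_constantCoeff, poch]

theorem one_sub_X_pow_mul_inverse_poch_succ (n : ℕ) :
    (1 - X ^ (n + 1)) * Ring.inverse (poch (n + 1)) = Ring.inverse (poch n) := by
  refine (isUnit_poch n).mul_left_cancel ?_
  rw [Ring.mul_inverse_cancel _ (isUnit_poch n), ← mul_assoc,
    show poch n * (1 - X ^ (n + 1)) = poch (n + 1) from (prod_range_succ _ _).symm,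
    Ring.mul_inverse_cancel _ (isUnit_poch (n + 1))]

noncomputable def lhsTerm (n : ℕ) : PowerSeries ℤ :=
  X ^ n.choose 2 * Ring.inverse (poch n)

/-- `q^{binom(n+1,2)} / (q;q)_n`, the `n`-th term of Euler's series for `(−q;q)_∞`. -/
noncomputable def eulerTerm (n : ℕ) : PowerSeries ℤ :=
  X ^ n * lhsTerm n

theorem one_sub_X_pow_mul_lhsTerm_succ (n : ℕ) :
    (1 - X ^ (n + 1)) * lhsTerm (n + 1) = X ^ n * lhsTerm n := by
  rw [lhsTerm, lhsTerm, choose_two_succ, pow_add, ← one_sub_X_pow_mul_inverse_poch_succ n]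
  ring

theorem one_sub_X_pow_mul_eulerTerm_succ (n : ℕ) :
    (1 - X ^ (n + 1)) * eulerTerm (n + 1) = X ^ (n + 1) * eulerTerm n := by
  simp only [eulerTerm]
  linear_combination X ^ (n + 1) * one_sub_X_pow_mul_lhsTerm_succ n

theorem lhsTerm_zero : lhsTerm 0 = eulerTerm 0 := by
  rw [eulerTerm, pow_zero, one_mul]

theorem lhsTerm_succ (n : ℕ) : lhsTerm (n + 1) = eulerTerm n + eulerTerm (n + 1) := by
  simp only [eulerTerm]
  linear_combination one_sub_X_pow_mul_lhsTerm_succ n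

theorem sum_lhsTerm_eq_sum_eulerTerm {δ : ℕ} (hδ : δ = 0 ∨ δ = 1) (M : ℕ) :
    ∑ i ∈ range (M + 1), lhsTerm (2 * i + δ)
      = ∑ n ∈ range (2 * M + 1 + δ), eulerTerm n := by
  induction M with
  | zero =>
    rcases hδ with rfl | rfl
    · simp [lhsTerm_zero]
    · simp [lhsTerm_succ, sum_range_succ]
  | succ M ih =>
    rw [sum_range_succ, ih, show 2 * (M + 1) + δ = 2 * M + 1 + δ + 1 by ring, lhsTerm_succ,
      show 2 * (M + 1) + 1 + δ = 2 * M + 1 + δ + 1 + 1 by ring, sum_range_succ, sum_range_succ]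
    ring

theorem coeff_eulerTerm_of_lt {m n : ℕ} (h : m < n) : coeff m (eulerTerm n) = 0 :=
  X_pow_dvd_iff.mp (dvd_mul_right _ _) m h

theorem coeff_sum_eulerTerm_of_lt {m K : ℕ} (h : m < K) :
    coeff m (∑ n ∈ range K, eulerTerm n) = coeff m (∑ n ∈ range (m + 1), eulerTerm n) := by
  obtain ⟨k, rfl⟩ := Nat.exists_eq_add_of_le h
  rw [sum_range_add, map_add, add_eq_left, map_sum]
  exact sum_eq_zero fun i _ => coeff_eulerTerm_of_lt (by omega)

/-- `(q^{N-k+1};q)_k = (1 - q^N) ⋯ (1 - q^{N-k+1})`, so that `qDescPoch N k / (q;q)_k` is the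
Gaussian binomial `[N, k]_q`; the factor `1 - q^0 = 0` makes it vanish for `k > N`. -/
noncomputable def qDescPoch (N k : ℕ) : PowerSeries ℤ :=
  ∏ j ∈ range k, (1 - X ^ (N - j))

theorem qDescPoch_zero_right (N : ℕ) : qDescPoch N 0 = 1 :=
  prod_range_zero _

theorem qDescPoch_succ_right (N k : ℕ) :
    qDescPoch N (k + 1) = qDescPoch N k * (1 - X ^ (N - k)) :=
  prod_range_succ _ _

theorem qDescPoch_succ_succ (N k : ℕ) :
    qDescPoch (N + 1) (k + 1) = (1 - X ^ (N + 1)) * qDescPoch N k := by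
  rw [qDescPoch, prod_range_succ', mul_comm]
  simp [qDescPoch]

theorem qDescPoch_self_succ (N : ℕ) : qDescPoch N (N + 1) = 0 := by
  simp [qDescPoch_succ_right]

theorem X_pow_dvd_qDescPoch_sub_one (N k : ℕ) :
    (X : PowerSeries ℤ) ^ (N + 1 - k) ∣ qDescPoch N k - 1 :=
  dvd_prod_sub_one fun j hj => by
    rw [sub_sub_cancel_left, dvd_neg]
    exact pow_dvd_pow _ (by have := mem_range.mp hj; omega)

theorem prod_one_add_X_pow_eq_sum (N : ℕ) :
    ∏ j ∈ range N, (1 + (X : PowerSeries ℤ) ^ (j + 1))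
      = ∑ k ∈ range (N + 1), qDescPoch N k * eulerTerm k := by
  induction N with
  | zero => simp [qDescPoch_zero_right, ← lhsTerm_zero, lhsTerm, poch]
  | succ N ih =>
    set G : ℕ → PowerSeries ℤ := fun k => qDescPoch N k * eulerTerm k
    have pascal : ∀ k ∈ range (N + 1),
        qDescPoch (N + 1) (k + 1) * eulerTerm (k + 1) = G (k + 1) + X ^ (N + 1) * G k := by
      intro k hk
      have hpow : (X : PowerSeries ℤ) ^ (N - k) * X ^ (k + 1) = X ^ (N + 1) := by
        rw [← pow_add]; congr 1; have := mem_range.mp hk; omega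
      simp only [G, qDescPoch_succ_succ, qDescPoch_succ_right]
      linear_combination X ^ (N - k) * qDescPoch N k * one_sub_X_pow_mul_eulerTerm_succ k
        + qDescPoch N k * (eulerTerm (k + 1) + eulerTerm k) * hpow
    have hG0 : G 0 = eulerTerm 0 := by simp [G, qDescPoch_zero_right]
    have hshift : ∑ k ∈ range (N + 1), G (k + 1) + G 0 = ∑ k ∈ range (N + 1), G k := by
      rw [← sum_range_succ', sum_range_succ, show G (N + 1) = 0 by simp [G, qDescPoch_self_succ],
        add_zero]
    rw [prod_range_succ, ih, sum_range_succ' _ (N + 1), sum_congr rfl pascal, sum_add_distrib,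
      ← mul_sum, qDescPoch_zero_right]
    linear_combination hG0 - hshift

theorem coeff_rhs (m : ℕ) : coeff m rhs = coeff m (∑ n ∈ range (m + 1), eulerTerm n) := by
  have htrunc : ∀ k ∈ range (m + 2),
      coeff m (qDescPoch (m + 1) k * eulerTerm k) = coeff m (eulerTerm k) := by
    intro k _
    rw [← sub_eq_zero, ← map_sub, ← sub_one_mul]
    refine X_pow_dvd_iff.mp ?_ m (by omega : m < (m + 2 - k) + k)
    rw [pow_add]
    exact mul_dvd_mul (X_pow_dvd_qDescPoch_sub_one _ _) (dvd_mul_right _ _)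
  rw [rhs, coeff_mk, prod_one_add_X_pow_eq_sum, map_sum, sum_congr rfl htrunc, ← map_sum,
    coeff_sum_eulerTerm_of_lt (by omega)]

theorem coeff_lhs (δ m : ℕ) :
    coeff m (lhs δ) = coeff m (∑ i ∈ range (m + 1), lhsTerm (2 * i + δ)) := by
  rw [lhs, coeff_mk]
  rfl

/-- For each `δ ∈ {0,1}`, `∑_{i ≥ 0} q^{binom(2i+δ,2)} / (q;q)_{2i+δ} = (−q;q)_∞` in
`ℤ[[q]]`. -/
theorem statement19 (δ : ℕ) (hδ : δ = 0 ∨ δ = 1) : lhs δ = rhs := by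
  ext m
  rw [coeff_lhs, sum_lhsTerm_eq_sum_eulerTerm hδ, coeff_sum_eulerTerm_of_lt (by omega), coeff_rhs]

end EulerSum
end
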